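/- For any bipartite pure state |ψ⟩_AB with Schmidt-like decomposition |ψ⟩ = Σ_{i=1}^{d_A} √p_i |i⟩_A |u_i⟩_B in the fixed incoherent basis of A (p_i ≥ 0, Σ p_i = 1, {|u_i⟩} unit vectors), the l1 IQ coherence equals C^{A|B}_{l1}(ψ_AB) = (Σ_i √p_i)² − 1, and consequently C^{A|B}_{l1}(ψ_AB) ≤ d_A − 1. -/

import Mathlib

open scoped BigOperators ComplexOrder Kronecker

/-- Trace norm: `‖P‖_tr = Tr √(Pᴴ P)`. -/
noncomputable def traceNorm {n : Type*} [Fintype n] [DecidableEq n] (P : Matrix n n ℂ) : ℝ :=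
  (((Matrix.posSemidef_conjTranspose_mul_self P).1.eigenvectorUnitary : Matrix n n ℂ) *
    Matrix.diagonal (((↑) : ℝ → ℂ) ∘ (Real.sqrt ·) ∘ (Matrix.posSemidef_conjTranspose_mul_self P).1.eigenvalues) *
    (star (Matrix.posSemidef_conjTranspose_mul_self P).1.eigenvectorUnitary : Matrix n n ℂ)).trace.re

/-- The B-blocks of an operator on H_A ⊗ H_B. -/
def blockB {A B : Type*} (Q : Matrix (A × B) (A × B) ℂ) (i j : A) : Matrix B B ℂ :=
  fun b b' => Q (i, b) (j, b')

/-- l1 norm of IQ coherence: C^{A|B}_{l1}(ρ) = Σ_{i≠j} ‖ρ^B_{ij}‖_tr. -/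
noncomputable def CIQl1 {A B : Type*} [Fintype A] [Fintype B] [DecidableEq A] [DecidableEq B]
    (ρ : Matrix (A × B) (A × B) ℂ) : ℝ :=
  ∑ i, ∑ j, if i = j then 0 else traceNorm (blockB ρ i j)

/-! The off-diagonal blocks of `|ψ⟩⟨ψ|` are rank one, `ψ_{ij} = √(p_i p_j) |u_i⟩⟨u_j|`, so their
trace norms are `√p_i √p_j`. Summing over `i ≠ j` gives `(∑ √p_i)² − ∑ p_i`, and Cauchy–Schwarz
bounds `(∑ √p_i)²` by `d_A ∑ p_i`. -/

open Matrix
open scoped MatrixOrder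

lemma traceNorm_eq_re_trace_sqrt {n : Type*} [Fintype n] [DecidableEq n] (P : Matrix n n ℂ) :
    traceNorm P = (CFC.sqrt (Pᴴ * P)).trace.re := by
  rw [CFC.sqrt_eq_real_sqrt _ (posSemidef_conjTranspose_mul_self P).nonneg, cfcₙ_eq_cfc,
    (posSemidef_conjTranspose_mul_self P).1.cfc_eq]
  rfl

lemma star_dotProduct_self_eq_sum_normSq {n : Type*} [Fintype n] (v : n → ℂ) :
    star v ⬝ᵥ v = ((∑ b, Complex.normSq (v b) : ℝ) : ℂ) := by
  push_cast
  exact Finset.sum_congr rfl fun b _ => (Complex.normSq_eq_conj_mul_self).symm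

lemma vecMulVec_star_mul_self {n : Type*} [Fintype n] (v : n → ℂ) :
    vecMulVec v (star v) * vecMulVec v (star v) =
      ((∑ b, Complex.normSq (v b) : ℝ) : ℂ) • vecMulVec v (star v) := by
  rw [vecMulVec_mul_vecMulVec, star_dotProduct_self_eq_sum_normSq, vecMulVec_smul]

lemma conjTranspose_mul_self_vecMulVec {n : Type*} [Fintype n] (v w : n → ℂ) :
    (vecMulVec v (star w))ᴴ * vecMulVec v (star w) =
      ((∑ b, Complex.normSq (v b) : ℝ) : ℂ) • vecMulVec w (star w) := by
  rw [conjTranspose_vecMulVec, star_star, vecMulVec_mul_vecMulVec,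
    star_dotProduct_self_eq_sum_normSq, vecMulVec_smul]

/- At `w = 0` the junk value `x / 0 = 0` makes both sides vanish. -/
lemma sqrt_conjTranspose_mul_self_vecMulVec {n : Type*} [Fintype n] [DecidableEq n]
    (v w : n → ℂ) :
    CFC.sqrt ((vecMulVec v (star w))ᴴ * vecMulVec v (star w)) =
      ((√(∑ b, Complex.normSq (v b)) / √(∑ b, Complex.normSq (w b)) : ℝ) : ℂ) •
        vecMulVec w (star w) := by
  set a := ∑ b, Complex.normSq (v b)
  set c := ∑ b, Complex.normSq (w b)
  have ha : 0 ≤ a := Finset.sum_nonneg fun b _ => Complex.normSq_nonneg _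
  have hc : 0 ≤ c := Finset.sum_nonneg fun b _ => Complex.normSq_nonneg _
  refine CFC.sqrt_unique ?_ ((posSemidef_vecMulVec_self_star w).smul ?_).nonneg
  · rw [conjTranspose_mul_self_vecMulVec, smul_mul_smul_comm, vecMulVec_star_mul_self, smul_smul]
    rcases eq_or_ne w 0 with rfl | hw
    · simp
    have hc0 : c ≠ 0 := fun h => hw <| dotProduct_star_self_eq_zero.mp <| by
      rw [star_dotProduct_self_eq_sum_normSq, ← Complex.ofReal_zero]
      exact congrArg _ h
    have key : √a / √c * (√a / √c) * c = a := by
      rw [div_mul_div_comm, Real.mul_self_sqrt ha, Real.mul_self_sqrt hc, div_mul_cancel₀ _ hc0]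
    exact congrArg (· • _) (by exact_mod_cast key)
  · exact Complex.zero_le_real.mpr (by positivity)

lemma traceNorm_vecMulVec_star {n : Type*} [Fintype n] [DecidableEq n] (v w : n → ℂ) :
    traceNorm (vecMulVec v (star w)) =
      √(∑ b, Complex.normSq (v b)) * √(∑ b, Complex.normSq (w b)) := by
  rw [traceNorm_eq_re_trace_sqrt, sqrt_conjTranspose_mul_self_vecMulVec, trace_smul,
    trace_vecMulVec, dotProduct_comm, star_dotProduct_self_eq_sum_normSq, smul_eq_mul,
    ← Complex.ofReal_mul, Complex.ofReal_re]
  set c := ∑ b, Complex.normSq (w b)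
  rcases eq_or_ne (√c) 0 with hc | hc
  · simp [hc]
  · rw [div_mul_eq_mul_div, div_eq_iff hc, mul_assoc,
      Real.mul_self_sqrt (Finset.sum_nonneg fun b _ => Complex.normSq_nonneg (w b))]

lemma sum_sum_ite_eq_zero_mul {ι R : Type*} [Fintype ι] [DecidableEq ι] [CommRing R]
    (f : ι → R) :
    ∑ i, ∑ j, (if i = j then 0 else f i * f j) = (∑ i, f i) ^ 2 - ∑ i, f i ^ 2 := by
  have hsplit : ∀ i j, (if i = j then 0 else f i * f j) =
      f i * f j - if i = j then f i * f j else 0 := by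
    intro i j
    split_ifs <;> simp
  simp only [hsplit, Finset.sum_sub_distrib, Finset.sum_ite_eq, Finset.mem_univ, if_true,
    ← Finset.mul_sum, ← Finset.sum_mul, sq]

lemma CIQl1_vecMulVec_star {A B : Type*} [Fintype A] [Fintype B] [DecidableEq A]
    [DecidableEq B] (ψ : A × B → ℂ) :
    CIQl1 (vecMulVec ψ (star ψ)) =
      (∑ i, √(∑ b, Complex.normSq (ψ (i, b)))) ^ 2 -
        ∑ i, √(∑ b, Complex.normSq (ψ (i, b))) ^ 2 := by
  have hblock : ∀ i j, traceNorm (blockB (vecMulVec ψ (star ψ)) i j) =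
      √(∑ b, Complex.normSq (ψ (i, b))) * √(∑ b, Complex.normSq (ψ (j, b))) := fun i j =>
    traceNorm_vecMulVec_star (fun b => ψ (i, b)) (fun b => ψ (j, b))
  simp only [CIQl1, hblock, sum_sum_ite_eq_zero_mul]

/-- for a pure state |ψ⟩ = Σ_i √p_i |i⟩_A |u_i⟩_B,
C^{A|B}_{l1}(ψ) = (Σ_i √p_i)² − 1, and hence C^{A|B}_{l1}(ψ) ≤ d_A − 1. -/
theorem CIQl1_pure {A B : Type*} [Fintype A] [Fintype B] [DecidableEq A] [DecidableEq B]
    (p : A → ℝ) (hp : ∀ i, 0 ≤ p i) (hsum : ∑ i, p i = 1)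
    (u : A → B → ℂ) (hu : ∀ i, ∑ b, Complex.normSq (u i b) = 1) :
    CIQl1 (Matrix.vecMulVec (fun x : A × B => (Real.sqrt (p x.1) : ℂ) * u x.1 x.2)
        (star fun x : A × B => (Real.sqrt (p x.1) : ℂ) * u x.1 x.2)) =
      (∑ i, Real.sqrt (p i)) ^ 2 - 1 ∧
    CIQl1 (Matrix.vecMulVec (fun x : A × B => (Real.sqrt (p x.1) : ℂ) * u x.1 x.2)
        (star fun x : A × B => (Real.sqrt (p x.1) : ℂ) * u x.1 x.2)) ≤
      (Fintype.card A : ℝ) - 1 := by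
  set ψ : A × B → ℂ := fun x => (√(p x.1) : ℂ) * u x.1 x.2
  have hrow : ∀ i, √(∑ b, Complex.normSq (ψ (i, b))) = √(p i) := fun i => by
    simp only [ψ, Complex.normSq_mul, Complex.normSq_ofReal, Real.mul_self_sqrt (hp i),
      ← Finset.mul_sum, hu i, mul_one]
  have hsq : ∑ i, √(p i) ^ 2 = 1 := by
    simp only [Real.sq_sqrt (hp _), hsum]
  have hcoh : CIQl1 (vecMulVec ψ (star ψ)) = (∑ i, √(p i)) ^ 2 - 1 := by
    rw [CIQl1_vecMulVec_star, ← hsq]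
    simp only [hrow]
  refine ⟨hcoh, ?_⟩
  have hCS := sq_sum_le_card_mul_sum_sq (s := Finset.univ) (f := fun i => √(p i))
  rw [hsq, mul_one, Finset.card_univ] at hCS
  linarith
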